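/- Let μ be a Borel probability measure on C([0,1]) with support Γ. Assume: (a) g((0,1)) ⊆ (0,1) for every g ∈ Γ; (b) there exist g₀, g₁ ∈ Γ with g₀(0) ∈ (0,1) and g₁(1) ∈ (0,1). Then every μ-invariant Borel probability measure ν on [0,1] satisfies ν({0}) = ν({1}) = 0. -/

import Mathlib

/-!
The boundary `{0, 1}` is backward invariant under every `g ∈ Γ`, so `ν (g⁻¹ {0, 1}) ≤ ν {0, 1}`.
For `g` in the open neighbourhood `U = {g | g e ∈ (0, 1)}` of `g₀` (resp. `g₁`), the endpoint `e`
is moreover missing from `g⁻¹ {0, 1}`, so integrating the invariance identity over `g` loses at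
least `ν {e} * μ U`; as `μ U > 0`, this forces `ν {e} = 0`.
-/

open MeasureTheory

/-- The topological support of a Borel measure. -/
def msupport {X : Type*} [TopologicalSpace X] [MeasurableSpace X] (μ : Measure X) : Set X :=
  {x | ∀ U : Set X, IsOpen U → x ∈ U → 0 < μ U}

theorem msupport_eq_support {X : Type*} [TopologicalSpace X] [MeasurableSpace X]
    (μ : Measure X) : msupport μ = μ.support := by
  rw [Measure.support_eq_forall_isOpen]
  exact Set.ext fun x => forall_congr' fun U => forall_comm

theorem measure_singleton_eq_zero_of_lintegral_preimage {X F : Type*} [MeasurableSpace X]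
    [MeasurableSingletonClass X] [MeasurableSpace F] [FunLike F X X]
    {μ : Measure F} [IsProbabilityMeasure μ] {ν : Measure X} [IsFiniteMeasure ν]
    {A : Set X} {U : Set F} {e : X}
    (he : e ∈ A) (hinv : ν A = ∫⁻ g, ν (g ⁻¹' A) ∂μ) (hA : ∀ᵐ g : F ∂μ, g ⁻¹' A ⊆ A)
    (hU : MeasurableSet U) (hU₀ : μ U ≠ 0) (hUe : ∀ g ∈ U, g e ∉ A) :
    ν {e} = 0 := by
  have hpoint : ∀ᵐ g : F ∂μ, ν (g ⁻¹' A) + U.indicator (fun _ => ν {e}) g ≤ ν A := by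
    filter_upwards [hA] with g hg
    by_cases hgU : g ∈ U
    · have hsub : g ⁻¹' A ⊆ A \ {e} := fun x hx =>
        ⟨hg hx, by rintro rfl; exact hUe g hgU hx⟩
      calc ν (g ⁻¹' A) + U.indicator (fun _ => ν {e}) g ≤ ν (A \ {e}) + ν (A ∩ {e}) := by
            rw [Set.indicator_of_mem hgU, Set.inter_singleton_of_mem he]
            gcongr
        _ = ν A := measure_sdiff_add_inter A (measurableSet_singleton e)
    · simpa [Set.indicator_of_notMem hgU] using measure_mono hg
  have hsum : ν A + ν {e} * μ U ≤ ν A + 0 := by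
    calc ν A + ν {e} * μ U = ∫⁻ g, ν (g ⁻¹' A) + U.indicator (fun _ => ν {e}) g ∂μ := by
          rw [lintegral_add_right _ (measurable_const.indicator hU),
            lintegral_indicator_const hU, hinv]
      _ ≤ ∫⁻ _, ν A ∂μ := lintegral_mono_ae hpoint
      _ = ν A + 0 := by simp
  simpa [hU₀] using ENNReal.le_of_add_le_add_left (measure_ne_top ν A) hsum

theorem unitInterval.compl_pair_zero_one : ({0, 1} : Set unitInterval)ᶜ = Set.Ioo 0 1 := by
  ext x
  simp [lt_iff_le_and_ne, unitInterval.le_one', eq_comm]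

/-- Let `μ` be a Borel probability measure on `C([0,1])` with support `Γ`. If every
`g ∈ Γ` maps `(0,1)` into `(0,1)`, and there are `g₀, g₁ ∈ Γ` with `g₀(0) ∈ (0,1)`
and `g₁(1) ∈ (0,1)`, then every `μ`-invariant Borel probability measure `ν` satisfies
`ν({0}) = ν({1}) = 0`. -/
theorem stmt_11 {mC : MeasurableSpace C(unitInterval, unitInterval)}
    [BorelSpace C(unitInterval, unitInterval)]
    (μ : Measure C(unitInterval, unitInterval)) [IsProbabilityMeasure μ]
    (ha : ∀ g ∈ msupport μ,
      (g : unitInterval → unitInterval) '' Set.Ioo 0 1 ⊆ Set.Ioo 0 1)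
    (hb : ∃ g₀ ∈ msupport μ, (g₀ : unitInterval → unitInterval) 0 ∈ Set.Ioo (0:unitInterval) 1)
    (hb' : ∃ g₁ ∈ msupport μ, (g₁ : unitInterval → unitInterval) 1 ∈ Set.Ioo (0:unitInterval) 1)
    (ν : Measure unitInterval) [IsProbabilityMeasure ν]
    (hinv : ∀ A : Set unitInterval, MeasurableSet A →
      ν A = ∫⁻ g, ν ((g : unitInterval → unitInterval) ⁻¹' A) ∂μ) :
    ν {0} = 0 ∧ ν {1} = 0 := by
  set A : Set unitInterval := {0, 1}
  have hΓ : ∀ᵐ g ∂μ, g ∈ msupport μ := by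
    rw [msupport_eq_support]
    exact Measure.support_mem_ae
  have hback : ∀ᵐ g : C(unitInterval, unitInterval) ∂μ, g ⁻¹' A ⊆ A := by
    filter_upwards [hΓ] with g hg
    have := Set.image_subset_iff.mp (ha g hg)
    rwa [← unitInterval.compl_pair_zero_one, Set.preimage_compl, Set.compl_subset_compl] at this
  have key : ∀ e ∈ A, (∃ g ∈ msupport μ, g e ∈ Set.Ioo 0 1) → ν {e} = 0 := by
    rintro e he ⟨g, hg, hge⟩
    have hU : IsOpen {g : C(unitInterval, unitInterval) | g e ∈ Set.Ioo 0 1} :=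
      isOpen_Ioo.preimage (continuous_eval_const e)
    refine measure_singleton_eq_zero_of_lintegral_preimage he
      (hinv A (Set.toFinite A).measurableSet) hback hU.measurableSet (hg _ hU hge).ne'
      fun g' hg'e => ?_
    rwa [← Set.mem_compl_iff, unitInterval.compl_pair_zero_one]
  exact ⟨key 0 (by simp [A]) hb, key 1 (by simp [A]) hb'⟩
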